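/- Let (X, d) be a complete metric space and for each i ∈ ℕ let F_i = {X; f_{1,i}, …, f_{n_i,i}} be a function system whose maps f_{r,i} : X → X are φ_{r,i}-contractions for comparison functions φ_{r,i} with φ_{r,i}(t) < t for t > 0, so that each induced set map F_i(A) = ⋃_{r=1}^{n_i} f_{r,i}(A) is a φ_i-contraction on (H(X), h) with φ_i = max_r φ_{r,i}. Suppose h(F_i(A₁), A₁) is bounded uniformly in i for some A₁ ∈ H(X), and that Σ_{k=1}^∞ φ₁∘φ₂∘⋯∘φ_k(t) < ∞ for every t > 0. Then the backward SFS trajectories Ψ_k(A) = F₁∘F₂∘⋯∘F_k(A) converge in the Hausdorff metric, for every A ∈ H(X), to one and the same set (the attractor), independent of A. -/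

import Mathlib

open Filter Set Topology

/-- Backward composition: `bwdComp g k = g 0 ∘ g 1 ∘ ⋯ ∘ g (k-1)`
(i.e. `g₁ ∘ g₂ ∘ ⋯ ∘ g_k` in 1-based notation). -/
def bwdComp {α : Type*} (g : ℕ → α → α) : ℕ → α → α
  | 0 => id
  | k + 1 => fun a => bwdComp g k (g k a)

/-!
Pass to the complete metric space `NonemptyCompacts X` with the Hausdorff metric, on which
each `F i` is a `φmax i`-contraction. Composed backwards, `F₁ ∘ ⋯ ∘ F_k` is then a
`φmax₁ ∘ ⋯ ∘ φmax_k`-contraction. Consecutive terms of the trajectory of `A₁` are therefore at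
distance at most `φmax₁ ∘ ⋯ ∘ φmax_k (M)`, a summable sequence, so this trajectory is Cauchy;
and the trajectory of any other `A` stays within `φmax₁ ∘ ⋯ ∘ φmax_k (h(A, A₁)) → 0` of it.
-/

open Function Metric TopologicalSpace

section BackwardComposition

variable {α β : Type*}

theorem Function.Semiconj.bwdComp {π : α → β} {G : ℕ → α → α} {F : ℕ → β → β}
    (h : ∀ i, Semiconj π (G i) (F i)) (k : ℕ) :
    Semiconj π (_root_.bwdComp G k) (_root_.bwdComp F k) := by
  induction k with
  | zero => exact fun _ => rfl
  | succ k ih => exact ih.comp_right (h k)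

variable {ψ : ℕ → ℝ → ℝ}

theorem mapsTo_bwdComp (hmaps : ∀ i, MapsTo (ψ i) (Ici 0) (Ici 0)) (k : ℕ) :
    MapsTo (bwdComp ψ k) (Ici 0) (Ici 0) := by
  induction k with
  | zero => exact mapsTo_id _
  | succ k ih => exact ih.comp (hmaps k)

theorem monotoneOn_bwdComp (hmaps : ∀ i, MapsTo (ψ i) (Ici 0) (Ici 0))
    (hmono : ∀ i, MonotoneOn (ψ i) (Ici 0)) (k : ℕ) : MonotoneOn (bwdComp ψ k) (Ici 0) := by
  induction k with
  | zero => exact monotoneOn_id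
  | succ k ih => exact ih.comp (hmono k) (hmaps k)

end BackwardComposition

section BackwardTrajectory

variable {Y : Type*} [MetricSpace Y] {G : ℕ → Y → Y} {ψ : ℕ → ℝ → ℝ}

theorem dist_bwdComp_le (hmaps : ∀ i, MapsTo (ψ i) (Ici 0) (Ici 0))
    (hmono : ∀ i, MonotoneOn (ψ i) (Ici 0))
    (hG : ∀ i x y, dist (G i x) (G i y) ≤ ψ i (dist x y)) (k : ℕ) (x y : Y) :
    dist (bwdComp G k x) (bwdComp G k y) ≤ bwdComp ψ k (dist x y) := by
  induction k generalizing x y with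
  | zero => exact le_rfl
  | succ k ih =>
    calc dist (bwdComp G k (G k x)) (bwdComp G k (G k y))
        ≤ bwdComp ψ k (dist (G k x) (G k y)) := ih _ _
      _ ≤ bwdComp ψ k (ψ k (dist x y)) :=
        monotoneOn_bwdComp hmaps hmono k dist_nonneg (hmaps k dist_nonneg) (hG k x y)

theorem summable_bwdComp (hmaps : ∀ i, MapsTo (ψ i) (Ici 0) (Ici 0))
    (hmono : ∀ i, MonotoneOn (ψ i) (Ici 0))
    (hsum : ∀ t : ℝ, 0 < t → Summable fun k => bwdComp ψ (k + 1) t) {t : ℝ} (ht : 0 ≤ t) :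
    Summable fun k => bwdComp ψ k t := by
  have hsum' : Summable fun k => bwdComp ψ k (t + 1) :=
    (summable_nat_add_iff 1).mp (hsum _ (by linarith))
  refine hsum'.of_nonneg_of_le (fun k => mapsTo_bwdComp hmaps k ht) fun k => ?_
  exact monotoneOn_bwdComp hmaps hmono k ht (by simp only [mem_Ici]; linarith) (by linarith)

theorem exists_tendsto_bwdComp [CompleteSpace Y] (hmaps : ∀ i, MapsTo (ψ i) (Ici 0) (Ici 0))
    (hmono : ∀ i, MonotoneOn (ψ i) (Ici 0))
    (hG : ∀ i x y, dist (G i x) (G i y) ≤ ψ i (dist x y)) {x₁ : Y} {M : ℝ}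
    (hM : ∀ i, dist x₁ (G i x₁) ≤ M)
    (hsum : ∀ t : ℝ, 0 < t → Summable fun k => bwdComp ψ (k + 1) t) :
    ∃ y, ∀ x, Tendsto (fun k => bwdComp G k x) atTop (𝓝 y) := by
  have hstep (k : ℕ) : dist (bwdComp G k x₁) (bwdComp G (k + 1) x₁) ≤ bwdComp ψ k M :=
    (dist_bwdComp_le hmaps hmono hG k _ _).trans <|
      monotoneOn_bwdComp hmaps hmono k dist_nonneg (dist_nonneg.trans (hM k)) (hM k)
  obtain ⟨y, hy⟩ := cauchySeq_tendsto_of_complete <| cauchySeq_of_dist_le_of_summable _ hstep <|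
    summable_bwdComp hmaps hmono hsum (dist_nonneg.trans (hM 0))
  refine ⟨y, fun x => hy.congr_dist <| squeeze_zero (fun _ => dist_nonneg)
    (fun k => dist_bwdComp_le hmaps hmono hG k x₁ x) ?_⟩
  exact (summable_bwdComp hmaps hmono hsum dist_nonneg).tendsto_atTop_zero

end BackwardTrajectory

theorem lipschitzWith_one_of_dist_le_of_lt {X : Type*} [MetricSpace X] {ψ : ℝ → ℝ} {g : X → X}
    (hψ : ∀ t, 0 < t → ψ t < t) (hg : ∀ x y, dist (g x) (g y) ≤ ψ (dist x y)) :
    LipschitzWith 1 g := by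
  refine LipschitzWith.mk_one fun x y => ?_
  rcases eq_or_ne x y with rfl | hxy
  · simp
  · exact (hg x y).trans (hψ _ (dist_pos.2 hxy)).le

section FiniteSupremum

variable {ι : Type*} [Finite ι] {φ : ι → ℝ → ℝ}

theorem monotoneOn_ciSup_apply {s : Set ℝ} (h : ∀ r, MonotoneOn (φ r) s) :
    MonotoneOn (fun t => ⨆ r, φ r t) s :=
  fun _ ha _ hb hab => ciSup_mono (Finite.bddAbove_range _) fun r => h r ha hb hab

theorem mapsTo_ciSup_apply [Nonempty ι] {s : Set ℝ} {c : ℝ} (h : ∀ r, MapsTo (φ r) s (Ici c)) :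
    MapsTo (fun t => ⨆ r, φ r t) s (Ici c) :=
  fun t ht =>
    le_ciSup_of_le (Finite.bddAbove_range fun r => φ r t) _ (h (Classical.arbitrary ι) ht)

end FiniteSupremum

section Hutchinson

variable {X ι : Type*} [MetricSpace X] {f : ι → X → X} {ψ : ℝ → ℝ}

theorem exists_mem_iUnion_image_dist_le (hψ : MonotoneOn ψ (Ici 0))
    (hf : ∀ r x y, dist (f r x) (f r y) ≤ ψ (dist x y)) {A B : Set X} (hA : IsCompact A)
    (hB : IsCompact B) (hBne : B.Nonempty) {x : X} (hx : x ∈ ⋃ r, f r '' A) :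
    ∃ y ∈ ⋃ r, f r '' B, dist x y ≤ ψ (hausdorffDist A B) := by
  obtain ⟨r, a, ha, rfl⟩ : ∃ r, ∃ a ∈ A, f r a = x := by simpa using hx
  obtain ⟨b, hb, hab⟩ := hB.exists_infDist_eq_dist hBne a
  have hfin : hausdorffEDist A B ≠ ⊤ :=
    hausdorffEDist_ne_top_of_nonempty_of_bounded ⟨a, ha⟩ hBne hA.isBounded hB.isBounded
  refine ⟨f r b, mem_iUnion.2 ⟨r, mem_image_of_mem _ hb⟩,
    (hf r a b).trans (hψ dist_nonneg hausdorffDist_nonneg ?_)⟩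
  exact hab ▸ infDist_le_hausdorffDist_of_mem ha hfin

theorem hausdorffDist_iUnion_image_le [Nonempty ι] (hψ : MonotoneOn ψ (Ici 0))
    (hf : ∀ r x y, dist (f r x) (f r y) ≤ ψ (dist x y)) {A B : Set X} (hA : IsCompact A)
    (hB : IsCompact B) (hAne : A.Nonempty) (hBne : B.Nonempty) :
    hausdorffDist (⋃ r, f r '' A) (⋃ r, f r '' B) ≤ ψ (hausdorffDist A B) := by
  obtain ⟨a, ha⟩ := hAne
  have hψ_nonneg : 0 ≤ ψ (hausdorffDist A B) := by
    obtain ⟨y, -, hy⟩ := exists_mem_iUnion_image_dist_le hψ hf hA hB hBne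
      (mem_iUnion.2 ⟨Classical.arbitrary ι, mem_image_of_mem _ ha⟩)
    exact dist_nonneg.trans hy
  refine hausdorffDist_le_of_mem_dist hψ_nonneg
    (fun x hx => exists_mem_iUnion_image_dist_le hψ hf hA hB hBne hx) fun y hy => ?_
  obtain ⟨x, hx, hyx⟩ := exists_mem_iUnion_image_dist_le hψ hf hB hA ⟨a, ha⟩ hy
  exact ⟨x, hx, hausdorffDist_comm (s := B) ▸ hyx⟩

variable [Finite ι] [Nonempty ι]

def hutchinson (hf : ∀ r, Continuous (f r)) (K : NonemptyCompacts X) : NonemptyCompacts X where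
  carrier := ⋃ r, f r '' K
  isCompact' := isCompact_iUnion fun r => K.isCompact.image (hf r)
  nonempty' := nonempty_iUnion.2 ⟨Classical.arbitrary ι, K.nonempty.image _⟩

theorem coe_hutchinson (hf : ∀ r, Continuous (f r)) (K : NonemptyCompacts X) :
    (hutchinson hf K : Set X) = ⋃ r, f r '' K :=
  rfl

theorem dist_hutchinson_le (hψ : MonotoneOn ψ (Ici 0))
    (hf : ∀ r, Continuous (f r)) (hfψ : ∀ r x y, dist (f r x) (f r y) ≤ ψ (dist x y))
    (K L : NonemptyCompacts X) : dist (hutchinson hf K) (hutchinson hf L) ≤ ψ (dist K L) :=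
  hausdorffDist_iUnion_image_le hψ hfψ K.isCompact L.isCompact K.nonempty L.nonempty

end Hutchinson

theorem backward_SFS_trajectories_convergence_general {X : Type*} [MetricSpace X]
    [CompleteSpace X]
    (n : ℕ → ℕ) (hn : ∀ i, 0 < n i)
    (f : (i : ℕ) → Fin (n i) → X → X)
    (φ : (i : ℕ) → Fin (n i) → ℝ → ℝ)
    (hmap : ∀ i r, ∀ t : ℝ, 0 ≤ t → 0 ≤ φ i r t)
    (hmono : ∀ i r, ∀ s t : ℝ, 0 ≤ s → s ≤ t → φ i r s ≤ φ i r t)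
    (hlt : ∀ i r, ∀ t : ℝ, 0 < t → φ i r t < t)
    (hcontr : ∀ i r, ∀ x y : X, dist (f i r x) (f i r y) ≤ φ i r (dist x y))
    (φmax : ℕ → ℝ → ℝ)
    (hφmax : ∀ i t, φmax i t = ⨆ r : Fin (n i), φ i r t)
    (F : ℕ → Set X → Set X)
    (hF : ∀ i A, F i A = ⋃ r : Fin (n i), f i r '' A)
    (A₁ : Set X) (hA₁ne : A₁.Nonempty) (hA₁c : IsCompact A₁)
    (M : ℝ) (hM : ∀ i, Metric.hausdorffDist (F i A₁) A₁ ≤ M)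
    (hsum : ∀ t : ℝ, 0 < t → Summable (fun k => bwdComp φmax (k + 1) t)) :
    ∃ Astar : Set X, Astar.Nonempty ∧ IsCompact Astar ∧
      ∀ A : Set X, A.Nonempty → IsCompact A →
        Tendsto (fun k => Metric.hausdorffDist (bwdComp F k A) Astar)
          atTop (nhds 0) := by
  have (i : ℕ) : Nonempty (Fin (n i)) := ⟨⟨0, hn i⟩⟩
  have hφmax_eq (i : ℕ) : φmax i = fun t => ⨆ r, φ i r t := funext (hφmax i)
  have hφmax_maps (i : ℕ) : MapsTo (φmax i) (Ici 0) (Ici 0) :=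
    hφmax_eq i ▸ mapsTo_ciSup_apply fun r t ht => hmap i r t ht
  have hφmax_mono (i : ℕ) : MonotoneOn (φmax i) (Ici 0) :=
    hφmax_eq i ▸ monotoneOn_ciSup_apply fun r s hs t _ hst => hmono i r s t hs hst
  have hcontr_max (i : ℕ) (r : Fin (n i)) (x y : X) :
      dist (f i r x) (f i r y) ≤ φmax i (dist x y) :=
    (hcontr i r x y).trans <| (hφmax i _).symm ▸
      le_ciSup (Finite.bddAbove_range fun r => φ i r (dist x y)) r
  have hf_cont (i : ℕ) (r : Fin (n i)) : Continuous (f i r) :=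
    (lipschitzWith_one_of_dist_le_of_lt (hlt i r) (hcontr i r)).continuous
  let G (i : ℕ) := hutchinson (hf_cont i)
  have hGF (i : ℕ) : Semiconj (↑) (G i) (F i) := fun K =>
    (coe_hutchinson _ K).trans (hF i K).symm
  let K₁ : NonemptyCompacts X := ⟨⟨A₁, hA₁c⟩, hA₁ne⟩
  have hK₁ (i : ℕ) : dist K₁ (G i K₁) ≤ M := by
    rw [dist_comm, NonemptyCompacts.dist_eq, hGF i K₁]
    exact hM i
  obtain ⟨K, hK⟩ := exists_tendsto_bwdComp hφmax_maps hφmax_mono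
    (fun i => dist_hutchinson_le (hφmax_mono i) (hf_cont i) (hcontr_max i)) hK₁ hsum
  refine ⟨K, K.nonempty, K.isCompact, fun A hAne hAc => ?_⟩
  refine (tendsto_iff_dist_tendsto_zero.1 (hK ⟨⟨A, hAc⟩, hAne⟩)).congr fun k => ?_
  rw [NonemptyCompacts.dist_eq, Semiconj.bwdComp hGF k]
  rfl

/-- **convergence of backward SFS trajectories.** The function systems
`F i (A) = ⋃_{r < n i} f i r '' A` consist of `φ i r`-contractions for comparison
functions `φ i r` with `φ i r t < t` for `t > 0`; `φmax i = max_r φ i r` is the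
comparison function of `F i` for the Hausdorff metric. If `h(F i A₁, A₁)` is bounded
uniformly in `i` for some nonempty compact `A₁` and `∑ₖ φmax₁∘⋯∘φmax_k (t) < ∞` for
every `t > 0`, then the backward SFS trajectories converge in the Hausdorff metric, for
every nonempty compact initial set, to one and the same set. -/
theorem backward_SFS_trajectories_convergence {X : Type*} [MetricSpace X]
    [CompleteSpace X]
    (n : ℕ → ℕ) (hn : ∀ i, 0 < n i)
    (f : (i : ℕ) → Fin (n i) → X → X)
    (φ : (i : ℕ) → Fin (n i) → ℝ → ℝ)
    (hmap : ∀ i r, ∀ t : ℝ, 0 ≤ t → 0 ≤ φ i r t)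
    (hmono : ∀ i r, ∀ s t : ℝ, 0 ≤ s → s ≤ t → φ i r s ≤ φ i r t)
    (hiter : ∀ i r, ∀ t : ℝ, 0 ≤ t → Tendsto (fun p => (φ i r)^[p] t) atTop (nhds 0))
    (hlt : ∀ i r, ∀ t : ℝ, 0 < t → φ i r t < t)
    (hcontr : ∀ i r, ∀ x y : X, dist (f i r x) (f i r y) ≤ φ i r (dist x y))
    (φmax : ℕ → ℝ → ℝ)
    (hφmax : ∀ i t, φmax i t = ⨆ r : Fin (n i), φ i r t)
    (F : ℕ → Set X → Set X)
    (hF : ∀ i A, F i A = ⋃ r : Fin (n i), f i r '' A)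
    (A₁ : Set X) (hA₁ne : A₁.Nonempty) (hA₁c : IsCompact A₁)
    (M : ℝ) (hM : ∀ i, Metric.hausdorffDist (F i A₁) A₁ ≤ M)
    (hsum : ∀ t : ℝ, 0 < t → Summable (fun k => bwdComp φmax (k + 1) t)) :
    ∃ Astar : Set X, Astar.Nonempty ∧ IsCompact Astar ∧
      ∀ A : Set X, A.Nonempty → IsCompact A →
        Tendsto (fun k => Metric.hausdorffDist (bwdComp F k A) Astar)
          atTop (nhds 0) :=
  backward_SFS_trajectories_convergence_general n hn f φ hmap hmono hlt hcontr φmax hφmax F hF A₁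
    hA₁ne hA₁c M hM hsum
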